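/- arXiv:2312.09697 — 3 statements merged into one kernel-verified Lean document; each statement's English description precedes it below -/
import Mathlib

section
/- Every nonnegative integer flow x' on a finite directed acyclic graph with integer node balances b (sources and sinks) decomposes into a finite multiset of directed paths from deficit nodes to surplus nodes: there exist paths p_1,…,p_k such that for every arc a, the number of paths using a equals x'_a, and each node's net path balance equals b_v. -/
/-!
From the tail of any arc carrying flow, follow arcs of positive flow for as long as possible.
Since `ord` strictly increases along arcs, this walk stops and uses no arc twice, so removing
it leaves a nonnegative flow of smaller total value. Along a directed path the contributions of
the arcs to the net outflow telescope to the indicator of its first tail minus that of its last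
head, so the balances of the remaining flow are those of the original one, corrected by exactly
this path. Induction on the total flow finishes the proof.
-/

open Finset

section Telescoping

variable {V A : Type*} (tail head : A → V)

theorem sum_map_sub_of_isChain {M : Type*} [AddCommGroup M] (g : V → M) :
    ∀ (l : List A) (hl : l ≠ []), l.IsChain (fun a a' => head a = tail a') →
      (l.map fun a => g (tail a) - g (head a)).sum
        = g (tail (l.head hl)) - g (head (l.getLast hl))
  | [a], _, _ => by simp
  | a :: a' :: l, _, hchain => by
    rw [List.isChain_cons_cons] at hchain
    have ih := sum_map_sub_of_isChain g (a' :: l) (List.cons_ne_nil a' l) hchain.2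
    rw [List.map_cons, List.sum_cons, ih, hchain.1, List.getLast_cons (List.cons_ne_nil a' l)]
    simp only [List.head_cons]
    abel

end Telescoping

section NetOutflow

variable {V A : Type*} [Fintype A] [DecidableEq V] (tail head : A → V)

def netOutflow (x : A → ℕ) (v : V) : ℤ :=
  (∑ a ∈ univ.filter (fun a => tail a = v), (x a : ℤ))
    - (∑ a ∈ univ.filter (fun a => head a = v), (x a : ℤ))

theorem netOutflow_eq_sum (x : A → ℕ) (v : V) :
    netOutflow tail head x v
      = ∑ a, x a • ((if tail a = v then 1 else 0) - (if head a = v then 1 else 0) : ℤ) := by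
  simp only [netOutflow, sum_filter, nsmul_eq_mul, mul_sub, mul_ite, mul_one, mul_zero,
    sum_sub_distrib]

theorem netOutflow_add (x y : A → ℕ) (v : V) :
    netOutflow tail head (x + y) v = netOutflow tail head x v + netOutflow tail head y v := by
  simp only [netOutflow, Pi.add_apply, Nat.cast_add, sum_add_distrib]
  ring

theorem netOutflow_count_of_isChain [DecidableEq A] (l : List A) (hl : l ≠ [])
    (hchain : l.IsChain (fun a a' => head a = tail a')) (v : V) :
    netOutflow tail head (l.count ·) v
      = (if tail (l.head hl) = v then 1 else 0) - (if head (l.getLast hl) = v then 1 else 0) := by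
  rw [← sum_map_sub_of_isChain tail head (fun w => if w = v then (1 : ℤ) else 0) l hl hchain,
    sum_list_map_count, netOutflow_eq_sum]
  exact (sum_subset (subset_univ _) fun a _ ha => by
    rw [List.count_eq_zero_of_not_mem (mt List.mem_toFinset.2 ha), zero_smul]).symm

end NetOutflow

section GreedyPath

variable {V A : Type*} [Fintype A] [DecidableEq V]

noncomputable def greedyPath (tail head : A → V) (ord : V → ℕ)
    (hacyc : ∀ a, ord (tail a) < ord (head a)) (x : A → ℕ) (v : V) : List A :=
  if h : ∃ a, tail a = v ∧ 0 < x a then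
    h.choose :: greedyPath tail head ord hacyc x (head h.choose)
  else []
termination_by #{a | ord v ≤ ord (tail a)}
decreasing_by
  have hlt := hacyc h.choose
  have hord : ord (tail h.choose) = ord v := congrArg ord h.choose_spec.1
  refine card_lt_card ((ssubset_iff_of_subset fun a ha => ?_).2 ⟨h.choose, ?_, ?_⟩)
  · simp only [mem_filter, mem_univ, true_and] at ha ⊢
    omega
  · simp [hord]
  · simpa using hlt

variable (tail head : A → V) (ord : V → ℕ) (hacyc : ∀ a, ord (tail a) < ord (head a))
  (x : A → ℕ)

theorem greedyPath_of_exists {v : V} (h : ∃ a, tail a = v ∧ 0 < x a) :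
    greedyPath tail head ord hacyc x v
      = h.choose :: greedyPath tail head ord hacyc x (head h.choose) := by
  rw [greedyPath, dif_pos h]

theorem greedyPath_of_not_exists {v : V} (h : ¬∃ a, tail a = v ∧ 0 < x a) :
    greedyPath tail head ord hacyc x v = [] := by
  rw [greedyPath, dif_neg h]

theorem greedyPath_ne_nil {v : V} (h : ∃ a, tail a = v ∧ 0 < x a) :
    greedyPath tail head ord hacyc x v ≠ [] := by
  simp [greedyPath_of_exists tail head ord hacyc x h]

theorem tail_of_mem_head?_greedyPath {v : V} {a : A}
    (ha : a ∈ (greedyPath tail head ord hacyc x v).head?) : tail a = v := by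
  by_cases h : ∃ a, tail a = v ∧ 0 < x a
  · rw [greedyPath_of_exists tail head ord hacyc x h, List.head?_cons, Option.mem_some_iff] at ha
    exact ha ▸ h.choose_spec.1
  · simp [greedyPath_of_not_exists tail head ord hacyc x h] at ha

theorem isChain_greedyPath (v : V) :
    (greedyPath tail head ord hacyc x v).IsChain (fun a a' => head a = tail a') := by
  induction v using greedyPath.induct tail head ord hacyc x with
  | case1 v h ih =>
    rw [greedyPath_of_exists tail head ord hacyc x h, List.isChain_cons]
    exact ⟨fun a ha => (tail_of_mem_head?_greedyPath tail head ord hacyc x ha).symm, ih⟩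
  | case2 v h => simp [greedyPath_of_not_exists tail head ord hacyc x h]

theorem pos_of_mem_greedyPath {v : V} :
    ∀ a ∈ greedyPath tail head ord hacyc x v, 0 < x a := by
  induction v using greedyPath.induct tail head ord hacyc x with
  | case1 v h ih =>
    rw [greedyPath_of_exists tail head ord hacyc x h]
    rintro a (_ | ⟨_, ha⟩)
    exacts [h.choose_spec.2, ih a ha]
  | case2 v h => simp [greedyPath_of_not_exists tail head ord hacyc x h]

theorem ord_le_of_mem_greedyPath {v : V} :
    ∀ a ∈ greedyPath tail head ord hacyc x v, ord v ≤ ord (tail a) := by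
  induction v using greedyPath.induct tail head ord hacyc x with
  | case1 v h ih =>
    rw [greedyPath_of_exists tail head ord hacyc x h]
    have hlt := hacyc h.choose
    rw [h.choose_spec.1] at hlt
    rintro a (_ | ⟨_, ha⟩)
    · rw [h.choose_spec.1]
    · exact hlt.le.trans (ih a ha)
  | case2 v h => simp [greedyPath_of_not_exists tail head ord hacyc x h]

theorem nodup_greedyPath (v : V) : (greedyPath tail head ord hacyc x v).Nodup := by
  induction v using greedyPath.induct tail head ord hacyc x with
  | case1 v h ih =>
    rw [greedyPath_of_exists tail head ord hacyc x h]
    refine List.nodup_cons.2 ⟨fun hmem => ?_, ih⟩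
    exact (hacyc h.choose).not_ge (ord_le_of_mem_greedyPath tail head ord hacyc x _ hmem)
  | case2 v h => simp [greedyPath_of_not_exists tail head ord hacyc x h]

theorem count_greedyPath_le [DecidableEq A] (v : V) (a : A) :
    (greedyPath tail head ord hacyc x v).count a ≤ x a := by
  rw [(nodup_greedyPath tail head ord hacyc x v).count]
  split_ifs with ha
  exacts [pos_of_mem_greedyPath tail head ord hacyc x a ha, Nat.zero_le _]

end GreedyPath

section Decomposition

variable {V A : Type*} [Fintype A] [DecidableEq A] [DecidableEq V] (tail head : A → V)

theorem exists_path_decomposition (ord : V → ℕ) (hacyc : ∀ a, ord (tail a) < ord (head a))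
    (x : A → ℕ) : ∃ (k : ℕ) (p : Fin k → {l : List A // l ≠ []}),
      (∀ i, (p i).1.IsChain (fun a a' => head a = tail a')) ∧
      (∀ a, ∑ i, (p i).1.count a = x a) ∧
      (∀ v, (∑ i, if tail ((p i).1.head (p i).2) = v then (1 : ℤ) else 0)
        - (∑ i, if head ((p i).1.getLast (p i).2) = v then (1 : ℤ) else 0)
        = netOutflow tail head x v) := by
  induction hn : ∑ a, x a using Nat.strong_induction_on generalizing x with
  | _ n ih =>
  by_cases hx : x = 0
  · subst hx
    exact ⟨0, Fin.elim0, fun i => i.elim0, by simp, fun v => by simp [netOutflow]⟩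
  obtain ⟨a₀, ha₀⟩ : ∃ a, 0 < x a := by
    simpa [funext_iff, Nat.pos_iff_ne_zero] using hx
  have hstart : ∃ a, tail a = tail a₀ ∧ 0 < x a := ⟨a₀, rfl, ha₀⟩
  set l := greedyPath tail head ord hacyc x (tail a₀)
  have hl : l ≠ [] := greedyPath_ne_nil tail head ord hacyc x hstart
  have hchain := isChain_greedyPath tail head ord hacyc x (tail a₀)
  have hle : ∀ a, l.count a ≤ x a := count_greedyPath_le tail head ord hacyc x (tail a₀)
  set y : A → ℕ := fun a => x a - l.count a
  have hxy : x = (l.count ·) + y := funext fun a => (Nat.add_sub_cancel' (hle a)).symm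
  have hlt : ∑ a, y a < n := by
    refine hn ▸ sum_lt_sum (fun a _ => Nat.sub_le _ _) ⟨l.head hl, mem_univ _, ?_⟩
    have hcount_pos := List.count_pos_iff.2 (List.head_mem hl)
    exact Nat.sub_lt (hcount_pos.trans_le (hle _)) hcount_pos
  obtain ⟨k, q, hq_chain, hq_count, hq_bal⟩ := ih _ hlt y rfl
  refine ⟨k + 1, Fin.cons ⟨l, hl⟩ q, fun i => Fin.cases hchain hq_chain i, fun a => ?_,
    fun v => ?_⟩
  · simp [Fin.sum_univ_succ, hq_count, hxy]
  · rw [hxy, netOutflow_add, netOutflow_count_of_isChain tail head l hl hchain, ← hq_bal]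
    simp only [Fin.sum_univ_succ, Fin.cons_zero, Fin.cons_succ]
    ring

end Decomposition

theorem integer_flow_path_decomposition_general
    {V A : Type*} [Fintype A] [DecidableEq A] [DecidableEq V]
    (tail head : A → V)
    -- acyclicity: arcs go forward w.r.t. a (topological / time) order
    (ord : V → ℕ) (hacyc : ∀ a : A, ord (tail a) < ord (head a))
    (x : A → ℕ) (b : V → ℤ)
    -- flow conservation with balances b
    (hcons : ∀ v : V,
      (∑ a ∈ Finset.univ.filter (fun a => tail a = v), (x a : ℤ))
        - (∑ a ∈ Finset.univ.filter (fun a => head a = v), (x a : ℤ)) = b v) :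
    ∃ (k : ℕ) (p : Fin k → {l : List A // l ≠ []}),
      -- each p i is a directed path
      (∀ i, List.Chain' (fun a a' => head a = tail a') (p i).1) ∧
      -- the number of paths using arc a equals the flow on a
      (∀ a : A, (∑ i, (p i).1.count a) = x a) ∧
      -- net path balance at each node equals b v
      (∀ v : V,
        (∑ i, (if tail ((p i).1.head (p i).2) = v then (1 : ℤ) else 0))
          - (∑ i, (if head ((p i).1.getLast (p i).2) = v then (1 : ℤ) else 0))
          = b v) := by
  obtain ⟨k, p, hchain, hcount, hbalance⟩ := exists_path_decomposition tail head ord hacyc x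
  exact ⟨k, p, hchain, hcount, fun v => (hbalance v).trans (hcons v)⟩

theorem integer_flow_path_decomposition
    {V A : Type*} [Fintype V] [Fintype A] [DecidableEq A] [DecidableEq V]
    (tail head : A → V)
    -- acyclicity: arcs go forward w.r.t. a (topological / time) order
    (ord : V → ℕ) (hacyc : ∀ a : A, ord (tail a) < ord (head a))
    (x : A → ℕ) (b : V → ℤ)
    -- flow conservation with balances b
    (hcons : ∀ v : V,
      (∑ a ∈ Finset.univ.filter (fun a => tail a = v), (x a : ℤ))
        - (∑ a ∈ Finset.univ.filter (fun a => head a = v), (x a : ℤ)) = b v) :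
    ∃ (k : ℕ) (p : Fin k → {l : List A // l ≠ []}),
      -- each p i is a directed path
      (∀ i, List.Chain' (fun a a' => head a = tail a') (p i).1) ∧
      -- the number of paths using arc a equals the flow on a
      (∀ a : A, (∑ i, (p i).1.count a) = x a) ∧
      -- net path balance at each node equals b v
      (∀ v : V,
        (∑ i, (if tail ((p i).1.head (p i).2) = v then (1 : ℤ) else 0))
          - (∑ i, (if head ((p i).1.getLast (p i).2) = v then (1 : ℤ) else 0))
          = b v) :=
  integer_flow_path_decomposition_general tail head ord hacyc x b hcons
end

section
/- Let (LP_D) be a linear program in variables x indexed by H = H_0 ∪ H_D (non-depot and depot arcs) of the form: min c^T x s.t. flow conservation at depot nodes, arbitrary constraints on x|_{H_0}, x ≥ 0, where c is supported on H_0 only (no parking or pull-in/out costs) and depot flow-conservation couples x|_{H_D} to x|_{H_0} via a path network per depot timeline. Let (LP_C) be the program obtained by eliminating the variables x|_{H_D}, replacing depot flow conservation by the cumulative inventory inequalities b_{0_v} − Σ_{h∈H⁺_v} ν_h x_h + Σ_{h∈H⁻_v} ν_h x_h ≥ 0 for each depot node v. Then for every x₀ feasible in (LP_C) there exists an extension (x₀,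 x_D) feasible in (LP_D) with equal cost, and conversely every feasible point of (LP_D) restricts to a feasible point of (LP_C) with equal cost; hence the two programs have equal optimal values, both as LPs and as IPs (with integrality on all variables). -/
open Finset

/-- pull amount at a depot node: ∑_h ν_h x_h with natural coefficients ν. -/
def pullAmt {H0 : Type*} [Fintype H0] (ν : H0 → ℕ) (x : H0 → ℝ) : ℝ :=
  ∑ h, (ν h : ℝ) * x h

/-- Feasibility of (LP_D): x0 satisfies the arbitrary non-depot constraints S0,
the parking flows xD are nonnegative and satisfy flow conservation along each
depot timeline d (nodes 0,…,k d, initial inventory b0 d, pull-ins/pull-outs at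
node i given by νin/νout applied to x0). -/
def DFeas {H0 D : Type*} [Fintype H0] (S0 : Set (H0 → ℝ))
    (k : D → ℕ) (b0 : D → ℕ) (νout νin : D → ℕ → H0 → ℕ)
    (x0 : H0 → ℝ) (xD : D → ℕ → ℝ) : Prop :=
  x0 ∈ S0 ∧
  (∀ d, ∀ i ≤ k d, 0 ≤ xD d i) ∧
  (∀ d, ∀ i ≤ k d,
    (if i = 0 then (b0 d : ℝ) else xD d (i - 1)) + pullAmt (νin d i) x0
      = pullAmt (νout d i) x0 + xD d i)

/-- Feasibility of (LP_C): x0 satisfies S0 and the cumulative inventory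
inequalities b_{0_v} − Σ_{h∈H⁺_v} ν_h x_h + Σ_{h∈H⁻_v} ν_h x_h ≥ 0. -/
def CFeas {H0 D : Type*} [Fintype H0] (S0 : Set (H0 → ℝ))
    (k : D → ℕ) (b0 : D → ℕ) (νout νin : D → ℕ → H0 → ℕ)
    (x0 : H0 → ℝ) : Prop :=
  x0 ∈ S0 ∧
  (∀ d, ∀ j ≤ k d,
    0 ≤ (b0 d : ℝ) - (∑ i ∈ Finset.range (j + 1), pullAmt (νout d i) x0)
      + ∑ i ∈ Finset.range (j + 1), pullAmt (νin d i) x0)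

/-- integrality of a real vector -/
def IsIntVec {ι : Type*} (x : ι → ℝ) : Prop := ∀ i, ∃ n : ℤ, x i = (n : ℝ)

/-!
Along a depot timeline, flow conservation is a recursion that determines the parking
flow at every node: it must equal the initial inventory minus the cumulative
pull-outs plus the cumulative pull-ins up to that node. Hence the depot variables can
be eliminated, and their nonnegativity becomes exactly the cumulative inventory
inequalities of the Composition model. The eliminated values are integral combinations
of the non-depot variables, so integrality is preserved, and since the cost ignores
the depot variables both models attain the same objective values.
-/

section StockRecursion

variable {R : Type*} [CommRing R] (b : R) (pout pin : ℕ → R)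

def cumulativeStock (j : ℕ) : R :=
  b - ∑ i ∈ range (j + 1), pout i + ∑ i ∈ range (j + 1), pin i

def IsStockFlow (n : ℕ) (x : ℕ → R) : Prop :=
  ∀ i ≤ n, (if i = 0 then b else x (i - 1)) + pin i = pout i + x i

theorem cumulativeStock_zero : cumulativeStock b pout pin 0 = b - pout 0 + pin 0 := by
  simp [cumulativeStock]

theorem cumulativeStock_succ (j : ℕ) :
    cumulativeStock b pout pin (j + 1) =
      cumulativeStock b pout pin j - pout (j + 1) + pin (j + 1) := by
  simp only [cumulativeStock, sum_range_succ _ (j + 1)]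
  ring

theorem isStockFlow_cumulativeStock (n : ℕ) :
    IsStockFlow b pout pin n (cumulativeStock b pout pin) := by
  rintro (_ | j) -
  · rw [if_pos rfl, cumulativeStock_zero]
    ring
  · rw [if_neg j.succ_ne_zero, Nat.add_sub_cancel, cumulativeStock_succ]
    ring

theorem IsStockFlow.eq_cumulativeStock {n : ℕ} {x : ℕ → R} (hx : IsStockFlow b pout pin n x) :
    ∀ j ≤ n, x j = cumulativeStock b pout pin j := by
  intro j hj
  induction j with
  | zero =>
    have h0 := hx 0 hj
    rw [if_pos rfl] at h0
    rw [cumulativeStock_zero]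
    linear_combination -h0
  | succ j ih =>
    have hsucc := hx (j + 1) hj
    rw [if_neg j.succ_ne_zero, Nat.add_sub_cancel, ih (by omega)] at hsucc
    rw [cumulativeStock_succ]
    linear_combination -hsucc

theorem cumulativeStock_mem {s : Subring R} (hb : b ∈ s) (hout : ∀ i, pout i ∈ s)
    (hin : ∀ i, pin i ∈ s) (j : ℕ) : cumulativeStock b pout pin j ∈ s :=
  s.add_mem (s.sub_mem hb (s.sum_mem fun i _ => hout i)) (s.sum_mem fun i _ => hin i)

end StockRecursion

theorem image_eq_image_fst_of_mem_iff {α β γ : Type*} (f : α → γ) {s : Set α}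
    {t : Set (α × β)} (h : ∀ a, a ∈ s ↔ ∃ b, (a, b) ∈ t) :
    f '' s = (fun p => f p.1) '' t := by
  rw [← Set.image_image f Prod.fst t]
  congr 1
  ext a
  simp [h]

theorem exists_intCast_eq_iff_mem_range {x : ℝ} :
    (∃ n : ℤ, x = n) ↔ x ∈ (Int.castRingHom ℝ).range := by
  simp [eq_comm]

theorem pullAmt_mem_range_intCast {H0 : Type*} [Fintype H0] (ν : H0 → ℕ) {x : H0 → ℝ}
    (hx : IsIntVec x) : pullAmt ν x ∈ (Int.castRingHom ℝ).range :=
  Subring.sum_mem _ fun h _ =>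
    Subring.mul_mem _ (natCast_mem _ _) (exists_intCast_eq_iff_mem_range.1 (hx h))

section Depot

variable {H0 D : Type*} [Fintype H0] {S0 : Set (H0 → ℝ)} {k : D → ℕ} {b0 : D → ℕ}
  {νout νin : D → ℕ → H0 → ℕ}

def depotStock (b0 : D → ℕ) (νout νin : D → ℕ → H0 → ℕ) (x0 : H0 → ℝ) (d : D) : ℕ → ℝ :=
  cumulativeStock (b0 d : ℝ) (fun i => pullAmt (νout d i) x0) (fun i => pullAmt (νin d i) x0)

theorem CFeas.dFeas_depotStock {x0 : H0 → ℝ} (hx : CFeas S0 k b0 νout νin x0) :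
    DFeas S0 k b0 νout νin x0 (depotStock b0 νout νin x0) :=
  ⟨hx.1, hx.2, fun d => isStockFlow_cumulativeStock _ _ _ (k d)⟩

theorem DFeas.eq_depotStock {x0 : H0 → ℝ} {xD : D → ℕ → ℝ}
    (hx : DFeas S0 k b0 νout νin x0 xD) (d : D) :
    ∀ i ≤ k d, xD d i = depotStock b0 νout νin x0 d i :=
  IsStockFlow.eq_cumulativeStock _ _ _ (hx.2.2 d)

theorem DFeas.cFeas {x0 : H0 → ℝ} {xD : D → ℕ → ℝ} (hx : DFeas S0 k b0 νout νin x0 xD) :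
    CFeas S0 k b0 νout νin x0 :=
  ⟨hx.1, fun d j hj =>
    (hx.eq_depotStock d j hj ▸ hx.2.1 d j hj : 0 ≤ depotStock b0 νout νin x0 d j)⟩

theorem cFeas_iff_exists_dFeas {x0 : H0 → ℝ} :
    CFeas S0 k b0 νout νin x0 ↔ ∃ xD, DFeas S0 k b0 νout νin x0 xD :=
  ⟨fun hx => ⟨_, hx.dFeas_depotStock⟩, fun ⟨_, hx⟩ => hx.cFeas⟩

theorem depotStock_isInt {x0 : H0 → ℝ} (hx : IsIntVec x0) (d : D) (i : ℕ) :
    ∃ n : ℤ, depotStock b0 νout νin x0 d i = n :=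
  exists_intCast_eq_iff_mem_range.2 <|
    cumulativeStock_mem _ _ _ (natCast_mem _ _)
      (fun _ => pullAmt_mem_range_intCast _ hx) (fun _ => pullAmt_mem_range_intCast _ hx) i

theorem cFeas_and_isIntVec_iff_exists_dFeas {x0 : H0 → ℝ} :
    CFeas S0 k b0 νout νin x0 ∧ IsIntVec x0 ↔
      ∃ xD, DFeas S0 k b0 νout νin x0 xD ∧ IsIntVec x0 ∧
        ∀ d, ∀ i ≤ k d, ∃ n : ℤ, xD d i = n :=
  ⟨fun ⟨hx, hint⟩ => ⟨_, hx.dFeas_depotStock, hint, fun d i _ => depotStock_isInt hint d i⟩,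
    fun ⟨_, hx, hint, _⟩ => ⟨hx.cFeas, hint⟩⟩

end Depot

theorem composition_model_eq_depot_model
    {H0 D : Type*} [Fintype H0]
    (S0 : Set (H0 → ℝ)) (c : H0 → ℝ)
    (k : D → ℕ) (b0 : D → ℕ) (νout νin : D → ℕ → H0 → ℕ) :
    -- every (LP_C)-feasible point extends to an (LP_D)-feasible point (same cost,
    -- since the cost only depends on x0)
    (∀ x0, CFeas S0 k b0 νout νin x0 →
      ∃ xD, DFeas S0 k b0 νout νin x0 xD) ∧
    -- every (LP_D)-feasible point restricts to an (LP_C)-feasible point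
    (∀ x0 xD, DFeas S0 k b0 νout νin x0 xD → CFeas S0 k b0 νout νin x0) ∧
    -- equal attainable objective values as LPs
    ((fun x0 => ∑ h, c h * x0 h) '' {x0 | CFeas S0 k b0 νout νin x0}
      = (fun p : (H0 → ℝ) × (D → ℕ → ℝ) => ∑ h, c h * p.1 h) ''
          {p | DFeas S0 k b0 νout νin p.1 p.2}) ∧
    -- integral points extend integrally
    (∀ x0, CFeas S0 k b0 νout νin x0 → IsIntVec x0 →
      ∃ xD, DFeas S0 k b0 νout νin x0 xD ∧ ∀ d, ∀ i ≤ k d, ∃ n : ℤ, xD d i = (n : ℝ)) ∧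
    -- equal attainable objective values as IPs
    ((fun x0 => ∑ h, c h * x0 h) ''
        {x0 | CFeas S0 k b0 νout νin x0 ∧ IsIntVec x0}
      = (fun p : (H0 → ℝ) × (D → ℕ → ℝ) => ∑ h, c h * p.1 h) ''
          {p | DFeas S0 k b0 νout νin p.1 p.2 ∧ IsIntVec p.1 ∧
            ∀ d, ∀ i ≤ k d, ∃ n : ℤ, p.2 d i = (n : ℝ)}) :=
  ⟨fun _ hx => ⟨_, hx.dFeas_depotStock⟩,
    fun _ _ hx => hx.cFeas,
    image_eq_image_fst_of_mem_iff _ fun _ => cFeas_iff_exists_dFeas,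
    fun _ hx hint => ⟨_, hx.dFeas_depotStock, fun d i _ => depotStock_isInt hint d i⟩,
    image_eq_image_fst_of_mem_iff _ fun _ => cFeas_and_isIntVec_iff_exists_dFeas⟩
end

section
/- In the literal-train gadget of the Theorem 2 reduction, the two feasible rotations of a literal train (the all-true and the all-false rotation) are the only composition assignments consistent with the allowed composition changes when no pull-out occurs; and if a pull-out to a clause trip occurs at clause C_i, then the literal train's truth value must equal the sign required for literal ℓ_j to satisfy C_i (true if ℓ_j occurs unnegated in C_i, false if negated). -/
/-!
STATEMENT 17: In the literal-train gadget of the Theorem 2 reduction (trips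
indexed 0,…,2K+1: the start trip, a pair of trips per clause occurrence, and
the end trip; compositions 0 = 'true' double, 1 = 'false' double, 2 = single
after a pull-out), the all-true and all-false rotations are the only feasible
assignments without a pull-out; and a pull-out at the occurrence for clause C_i
forces the literal train's truth value to equal the sign required to satisfy
C_i (true for an unnegated occurrence, false for a negated one).
-/

/-- allowed compositions at position j; `sgn i = true` iff the i-th occurrence
of the literal is unnegated. -/
def litAllowed (K : ℕ) (sgn : ℕ → Bool) (j : ℕ) : Finset ℕ :=
  if j = 0 ∨ j = 2 * K + 1 then {0, 1}
  else if j % 2 = 1 then (if sgn ((j - 1) / 2) = true then {0, 1, 2} else {0, 1})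
  else if sgn ((j - 2) / 2) = false then {0, 1, 2} else {0, 1}

/-- allowed composition changes between positions j and j+1: true→true and
false→false always; a pull-out to (and return from) the clause trip only at an
occurrence of matching sign. -/
def litChg (K : ℕ) (sgn : ℕ → Bool) (j : ℕ) : Finset (ℕ × ℕ) :=
  ({(0, 0), (1, 1)} : Finset (ℕ × ℕ))
  ∪ (if (j + 1) % 2 = 1 ∧ j + 1 < 2 * K + 1 ∧ sgn (j / 2) = true then {(0, 2)} else ∅)
  ∪ (if j % 2 = 1 ∧ j < 2 * K + 1 ∧ sgn ((j - 1) / 2) = true then {(2, 0)} else ∅)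
  ∪ (if (j + 1) % 2 = 0 ∧ 2 ≤ j + 1 ∧ j + 1 ≤ 2 * K ∧ sgn ((j - 1) / 2) = false
      then {(1, 2)} else ∅)
  ∪ (if j % 2 = 0 ∧ 2 ≤ j ∧ j ≤ 2 * K ∧ sgn ((j - 2) / 2) = false
      then {(2, 1)} else ∅)

/-- feasible composition assignments through one literal gadget -/
def LitFeas (K : ℕ) (sgn : ℕ → Bool) (x : ℕ → ℕ) : Prop :=
  (∀ j ≤ 2 * K + 1, x j ∈ litAllowed K sgn j) ∧
  (∀ j < 2 * K + 1, (x j, x (j + 1)) ∈ litChg K sgn j)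
/-!
Forgetting the sign conditions, an allowed change either keeps a double composition or moves
between the single composition and the 'true' double across an odd position, or the 'false'
double across an even one. By induction along the train, every composition is therefore the
double of the start trip or a single at a position whose parity that double determines. So a
pull-out at an odd (even) position forces the 'true' ('false') rotation, and the allowed
compositions at that position force the matching sign of the occurrence.
-/

lemma litAllowed_zero (K : ℕ) (sgn : ℕ → Bool) : litAllowed K sgn 0 = {0, 1} := by
  simp [litAllowed]

lemma sgn_eq_true_of_two_mem_litAllowed {K : ℕ} {sgn : ℕ → Bool} {i : ℕ} (hi : i < K)
    (h : 2 ∈ litAllowed K sgn (2 * i + 1)) : sgn i = true := by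
  by_contra hs
  simp [litAllowed, hs, hi.ne] at h

lemma sgn_eq_false_of_two_mem_litAllowed {K : ℕ} {sgn : ℕ → Bool} {i : ℕ}
    (h : 2 ∈ litAllowed K sgn (2 * i + 2)) : sgn i = false := by
  by_contra hs
  simp [litAllowed, hs] at h

lemma litChg_cases {K : ℕ} {sgn : ℕ → Bool} {j a b : ℕ} (h : (a, b) ∈ litChg K sgn j) :
    (a = 0 ∧ b = 0) ∨ (a = 1 ∧ b = 1) ∨
    (a = 0 ∧ b = 2 ∧ (j + 1) % 2 = 1) ∨ (a = 2 ∧ b = 0 ∧ j % 2 = 1) ∨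
    (a = 1 ∧ b = 2 ∧ (j + 1) % 2 = 0) ∨ (a = 2 ∧ b = 1 ∧ j % 2 = 0) := by
  simp only [litChg, Finset.mem_union, Finset.mem_insert, Finset.mem_singleton,
    Prod.mk.injEq] at h
  split_ifs at h <;> simp at h <;> omega

lemma eq_start_or_pullout {K : ℕ} {sgn : ℕ → Bool} {x : ℕ → ℕ} {n : ℕ}
    (hchg : ∀ j < n, (x j, x (j + 1)) ∈ litChg K sgn j) (h0 : x 0 ≤ 1) :
    ∀ j ≤ n, x j = x 0 ∨ (x j = 2 ∧ j % 2 + x 0 = 1) := by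
  intro j hj
  induction j with
  | zero => exact Or.inl rfl
  | succ j ih =>
    have := ih (by omega)
    have := litChg_cases (hchg j (by omega))
    omega

theorem literal_gadget_characterization
    (K : ℕ) (sgn : ℕ → Bool) (x : ℕ → ℕ) (hx : LitFeas K sgn x) :
    -- without any pull-out, only the all-true and the all-false rotations
    ((∀ j ≤ 2 * K + 1, x j ≠ 2) →
      ((∀ j ≤ 2 * K + 1, x j = 0) ∨ (∀ j ≤ 2 * K + 1, x j = 1))) ∧
    -- a pull-out forces the truth value matching the occurrence's sign
    (∀ i < K,
      (x (2 * i + 1) = 2 →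
        sgn i = true ∧ ∀ j ≤ 2 * K + 1, x j = 2 ∨ x j = 0) ∧
      (x (2 * i + 2) = 2 →
        sgn i = false ∧ ∀ j ≤ 2 * K + 1, x j = 2 ∨ x j = 1)) := by
  obtain ⟨hallowed, hchg⟩ := hx
  have hstart : x 0 = 0 ∨ x 0 = 1 := by
    simpa [litAllowed_zero] using hallowed 0 (by omega)
  have hclass := eq_start_or_pullout hchg (by omega)
  refine ⟨fun hno => ?_, fun i hi => ⟨fun h2 => ?_, fun h2 => ?_⟩⟩
  · rcases hstart with h0 | h0
    · exact Or.inl fun j hj => by have := hclass j hj; have := hno j hj; omega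
    · exact Or.inr fun j hj => by have := hclass j hj; have := hno j hj; omega
  · have h0 : x 0 = 0 := by have := hclass (2 * i + 1) (by omega); omega
    have h2mem : 2 ∈ litAllowed K sgn (2 * i + 1) := by
      simpa [h2] using hallowed (2 * i + 1) (by omega)
    exact ⟨sgn_eq_true_of_two_mem_litAllowed hi h2mem,
      fun j hj => by have := hclass j hj; omega⟩
  · have h0 : x 0 = 1 := by have := hclass (2 * i + 2) (by omega); omega
    have h2mem : 2 ∈ litAllowed K sgn (2 * i + 2) := by
      simpa [h2] using hallowed (2 * i + 2) (by omega)
    exact ⟨sgn_eq_false_of_two_mem_litAllowed h2mem,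
      fun j hj => by have := hclass j hj; omega⟩
end
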